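/- arXiv:2603.23429 — 4 statements merged into one kernel-verified Lean document; each statement's English description precedes it below -/
import Mathlib

section
/- In any semifield, the multiplicative group is torsion-free: if p is an element of a semifield P and p^e = 1 for some integer e ≥ 1, then p = 1. -/
/-- A semifield in the sense of cluster-algebra theory: a multiplicative abelian
group together with a commutative, associative auxiliary addition `sadd` over
which multiplication distributes. -/
class ClusterSemifield (P : Type*) extends CommGroup P where
  sadd : P → P → P
  sadd_comm : ∀ a b : P, sadd a b = sadd b a
  sadd_assoc : ∀ a b c : P, sadd (sadd a b) c = sadd a (sadd b c)
  mul_sadd : ∀ a b c : P, a * sadd b c = sadd (a * b) (a * c)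

namespace ClusterSemifieldAux

open ClusterSemifield

variable {P : Type*} [ClusterSemifield P]

/-- `S p n = p^0 ⊕ p^1 ⊕ ... ⊕ p^n`. -/
def S (p : P) : ℕ → P
  | 0 => 1
  | n + 1 => sadd (S p n) (p ^ (n + 1))

/-- `T p k = p^1 ⊕ ... ⊕ p^(k+1)`. -/
def T (p : P) : ℕ → P
  | 0 => p
  | k + 1 => sadd (T p k) (p ^ (k + 2))

lemma key (p : P) : ∀ k, p * S p (k + 1) = sadd (T p k) (p ^ (k + 2)) ∧
    S p (k + 1) = sadd 1 (T p k) := by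
  intro k
  induction k with
  | zero =>
    constructor
    · show p * sadd (S p 0) (p ^ 1) = sadd p (p ^ 2)
      simp only [S]
      rw [mul_sadd, mul_one, pow_one, ← pow_two]
    · show sadd (S p 0) (p ^ 1) = sadd 1 (T p 0)
      simp [S, T, pow_one]
  | succ k ih =>
    obtain ⟨ih1, ih2⟩ := ih
    constructor
    · show p * sadd (S p (k + 1)) (p ^ (k + 2)) = sadd (sadd (T p k) (p ^ (k + 2))) (p ^ (k + 3))
      rw [mul_sadd, ih1]
      congr 1
      rw [← pow_succ']
    · show sadd (S p (k + 1)) (p ^ (k + 2)) = sadd 1 (sadd (T p k) (p ^ (k + 2)))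
      rw [ih2, sadd_assoc]

end ClusterSemifieldAux

open ClusterSemifield ClusterSemifieldAux in
/-- In any semifield, the multiplicative group is torsion-free: if `p ^ e = 1`
for some integer `e ≥ 1`, then `p = 1`. -/
theorem semifield_torsion_free {P : Type*} [ClusterSemifield P]
    (p : P) (e : ℕ) (he : 1 ≤ e) (h : p ^ e = 1) : p = 1 := by
  match e, he with
  | 1, _ => simpa using h
  | (k + 2), _ =>
    obtain ⟨h1, h2⟩ := key p k
    rw [h, sadd_comm, ← h2] at h1
    exact mul_right_cancel (h1.trans (one_mul _).symm)
end

section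
/- For an acyclically ordered skew-symmetrizable matrix, the full mutation sequence 1, 2, …, n is a mutation symmetry: if B = [b_{ij}] is an n×n skew-symmetrizable real matrix with the property that b_{ij} > 0 implies i < j, then (μ_n ∘ μ_{n−1} ∘ ⋯ ∘ μ_1)(B) = B. -/
/-!
Since the `d i` are positive, `b i j` and `b j i` have opposite signs, so acyclicity forces
`b i j ≥ 0` for `i ≤ j` and `b i j ≤ 0` for `j ≤ i`. Mutating at a source `k` (column `k`
nonpositive, row `k` nonnegative) kills both correction terms and merely negates row and
column `k`. Hence after mutating at `0, …, k - 1` the matrix is `D B D` with `D` the signature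
matrix negating the indices below `k`; in this matrix `k` is a source. After all `n` steps
`D = -1`, and `(-1) B (-1) = B`.
-/

/-- Matrix mutation in direction `k`. -/
def mutate {n : ℕ} (B : Matrix (Fin n) (Fin n) ℝ) (k : Fin n) :
    Matrix (Fin n) (Fin n) ℝ :=
  fun i j =>
    if i = k ∨ j = k then -B i j
    else B i j + max 0 (-B i k) * B k j + B i k * max 0 (B k j)

open Matrix

variable {n : ℕ}

def IsSource (B : Matrix (Fin n) (Fin n) ℝ) (k : Fin n) : Prop :=
  (∀ i, B i k ≤ 0) ∧ ∀ j, 0 ≤ B k j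

theorem mutate_of_isSource {B : Matrix (Fin n) (Fin n) ℝ} {k : Fin n} (hk : IsSource B k) :
    mutate B k = fun i j => if i = k ∨ j = k then -B i j else B i j := by
  funext i j
  unfold mutate
  split_ifs
  · rfl
  · rw [max_eq_right (neg_nonneg.mpr (hk.1 i)), max_eq_right (hk.2 j)]
    ring

def prefixSign (k : ℕ) (i : Fin n) : ℝ := if (i : ℕ) < k then -1 else 1

theorem prefixSign_succ (k : Fin n) (i : Fin n) :
    prefixSign (k + 1) i = if i = k then -prefixSign k i else prefixSign k i := by
  unfold prefixSign
  split_ifs <;> grind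

theorem isSource_prefixSign {B : Matrix (Fin n) (Fin n) ℝ}
    (hlower : ∀ i j, j ≤ i → B i j ≤ 0) (hupper : ∀ i j, i ≤ j → 0 ≤ B i j) (k : Fin n) :
    IsSource (diagonal (prefixSign k) * B * diagonal (prefixSign k)) k := by
  have hk : prefixSign k k = 1 := if_neg (lt_irrefl _)
  constructor
  · intro i
    simp only [mul_diagonal, diagonal_mul, hk, mul_one]
    unfold prefixSign
    split_ifs with hi
    · linarith [hupper i k (le_of_lt hi)]
    · linarith [hlower i k (not_lt.mp hi)]
  · intro j
    simp only [mul_diagonal, diagonal_mul, hk, one_mul]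
    unfold prefixSign
    split_ifs with hj
    · linarith [hlower k j (le_of_lt hj)]
    · linarith [hupper k j (not_lt.mp hj)]

theorem mutate_prefixSign_conj {B : Matrix (Fin n) (Fin n) ℝ}
    (hlower : ∀ i j, j ≤ i → B i j ≤ 0) (hupper : ∀ i j, i ≤ j → 0 ≤ B i j) (k : Fin n) :
    mutate (diagonal (prefixSign k) * B * diagonal (prefixSign k)) k =
      diagonal (prefixSign (k + 1)) * B * diagonal (prefixSign (k + 1)) := by
  have hdiag : B k k = 0 := le_antisymm (hlower k k le_rfl) (hupper k k le_rfl)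
  rw [mutate_of_isSource (isSource_prefixSign hlower hupper k)]
  funext i j
  simp only [mul_diagonal, diagonal_mul, prefixSign_succ]
  split_ifs <;> simp_all

theorem take_succ_finRange {k : ℕ} (hk : k < n) :
    (List.finRange n).take (k + 1) = (List.finRange n).take k ++ [⟨k, hk⟩] := by
  simp [List.take_add_one, hk]

theorem foldl_mutate_take_finRange {B : Matrix (Fin n) (Fin n) ℝ}
    (hlower : ∀ i j, j ≤ i → B i j ≤ 0) (hupper : ∀ i j, i ≤ j → 0 ≤ B i j) :
    ∀ k ≤ n, ((List.finRange n).take k).foldl mutate B =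
      diagonal (prefixSign k) * B * diagonal (prefixSign k)
  | 0, _ => by
    have hone : prefixSign (n := n) 0 = 1 := funext fun i => if_neg (Nat.not_lt_zero i)
    simp [hone]
  | k + 1, hk => by
    rw [take_succ_finRange hk, List.foldl_append, List.foldl_cons, List.foldl_nil,
      foldl_mutate_take_finRange hlower hupper k (Nat.le_of_succ_le hk)]
    exact mutate_prefixSign_conj hlower hupper ⟨k, hk⟩

theorem pos_of_neg_of_skew {B : Matrix (Fin n) (Fin n) ℝ} {d : Fin n → ℝ} (hd : ∀ i, 0 < d i)
    (hskew : ∀ i j, d i * B i j = -(d j * B j i)) {i j : Fin n} (h : B i j < 0) :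
    0 < B j i :=
  (pos_iff_pos_of_mul_pos (by linarith [hskew i j, mul_neg_of_pos_of_neg (hd i) h])).mp (hd j)

/-- For an acyclically ordered skew-symmetrizable matrix, mutating successively
at `1, 2, …, n` returns the original matrix. -/
theorem mutate_sequence_symmetry {n : ℕ} (B : Matrix (Fin n) (Fin n) ℝ)
    (d : Fin n → ℝ) (hd : ∀ i, 0 < d i)
    (hskew : ∀ i j, d i * B i j = -(d j * B j i))
    (hacyclic : ∀ i j, 0 < B i j → i < j) :
    (List.finRange n).foldl mutate B = B := by
  have hlower : ∀ i j, j ≤ i → B i j ≤ 0 := fun i j hji =>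
    not_lt.mp fun h => (hacyclic i j h).not_ge hji
  have hupper : ∀ i j, i ≤ j → 0 ≤ B i j := fun i j hij =>
    not_lt.mp fun h => (hacyclic j i (pos_of_neg_of_skew hd hskew h)).not_ge hij
  have hall : diagonal (prefixSign n) = (-1 : Matrix (Fin n) (Fin n) ℝ) := by
    rw [← diagonal_one, diagonal_neg]
    exact congrArg diagonal (funext fun i => if_pos i.isLt)
  have hfull := foldl_mutate_take_finRange hlower hupper n le_rfl
  rwa [List.take_of_length_le List.length_finRange.le, hall, neg_mul, one_mul, mul_neg, mul_one,
    neg_neg] at hfull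
end

section
/- Howlett's matrix form of the Coxeter element: let R be a commutative ring and A an n×n matrix over R with all diagonal entries equal to 2. Write A = L + U, where L is the lower-triangular matrix with unit diagonal whose strictly lower entries agree with A, and U is the upper-triangular matrix with unit diagonal whose strictly upper entries agree with A. For each k, let S_k = I − E_{kk}·A, where E_{kk} is the matrix unit (so S_k sends the j-th standard basis vector e_j to e_j − a_{kj}e_k). Then S_1·S_2·⋯·S_n = −U^{-1}·L. -/
/-!
Let `P m` be the diagonal projection onto the first `m` coordinates. Column `k` of
`U - P k * A` is the basis vector `e k`: above the diagonal the entries of `U` and of `A`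
cancel, and `U k k = 1`. Hence `(U - P k * A) * S k = U - P k * A - E k k * A = U - P (k+1) * A`,
so `U * S 0 ⋯ S (n-1) = U - A = -L`, and `U` is invertible because it is unitriangular.
-/
open Matrix

section Unitriangular

variable {ι R : Type*} [LinearOrder ι] [CommRing R]

def unitUpper (A : Matrix ι ι R) : Matrix ι ι R :=
  of fun i j => if i = j then 1 else if i < j then A i j else 0

def unitLower (A : Matrix ι ι R) : Matrix ι ι R :=
  of fun i j => if i = j then 1 else if j < i then A i j else 0

theorem det_unitUpper [Fintype ι] (A : Matrix ι ι R) : (unitUpper A).det = 1 := by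
  have hupper : (unitUpper A).IsUpperTriangular := fun i j (hji : j < i) => by
    simp [unitUpper, hji.ne', not_lt.mpr hji.le]
  rw [det_of_isUpperTriangular hupper]
  simp [unitUpper]

theorem unitUpper_sub_self {A : Matrix ι ι R} (hdiag : ∀ i, A i i = 2) :
    unitUpper A - A = -unitLower A := by
  ext i j
  rcases lt_trichotomy i j with h | rfl | h
  · simp [unitUpper, unitLower, h.ne, h, asymm h]
  · norm_num [unitUpper, unitLower, hdiag]
  · simp [unitUpper, unitLower, h.ne', h, asymm h]

end Unitriangular

section Coxeter

variable {R : Type*} [CommRing R] {n : ℕ}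

def prefixProj (m : ℕ) : Matrix (Fin n) (Fin n) R :=
  diagonal fun i => if (i : ℕ) < m then 1 else 0

theorem prefixProj_zero : (prefixProj 0 : Matrix (Fin n) (Fin n) R) = 0 := by
  simp [prefixProj]

theorem prefixProj_eq_one : (prefixProj n : Matrix (Fin n) (Fin n) R) = 1 := by
  simp [prefixProj, ← diagonal_one]

theorem prefixProj_succ (k : Fin n) :
    (prefixProj (k + 1) : Matrix (Fin n) (Fin n) R) = prefixProj k + single k k 1 := by
  rw [prefixProj, prefixProj, ← diagonal_single, diagonal_add]
  congr 1
  ext i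
  rcases lt_trichotomy i k with h | rfl | h
  · simp [h.ne, Fin.lt_def.mp h, not_lt.mpr h.le]
  · simp
  · simp [h.ne', not_le.mpr h, not_lt.mpr h.le]

theorem unitUpper_sub_prefixProj_mul_single (A : Matrix (Fin n) (Fin n) R) (k : Fin n) :
    (unitUpper A - prefixProj k * A) * single k k 1 = single k k 1 := by
  ext i j
  by_cases hj : j = k
  · subst hj
    rcases lt_trichotomy i j with h | rfl | h
    · simp [unitUpper, prefixProj, h, h.ne, h.ne']
    · simp [unitUpper, prefixProj]
    · simp [unitUpper, prefixProj, h.ne, h.ne', not_lt.mpr h.le]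
  · simp [mul_single_apply_of_ne _ _ _ _ _ hj, Ne.symm hj]

def simpleReflection (A : Matrix (Fin n) (Fin n) R) (k : Fin n) : Matrix (Fin n) (Fin n) R :=
  1 - single k k 1 * A

theorem unitUpper_sub_prefixProj_mul_simpleReflection (A : Matrix (Fin n) (Fin n) R)
    (k : Fin n) :
    (unitUpper A - prefixProj k * A) * simpleReflection A k =
      unitUpper A - prefixProj (k + 1) * A := by
  rw [simpleReflection, mul_sub, mul_one, ← mul_assoc, unitUpper_sub_prefixProj_mul_single,
    prefixProj_succ, add_mul, sub_sub]

theorem unitUpper_mul_prod_take_simpleReflection (A : Matrix (Fin n) (Fin n) R) {m : ℕ}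
    (hm : m ≤ n) :
    unitUpper A * (((List.finRange n).map (simpleReflection A)).take m).prod =
      unitUpper A - prefixProj m * A := by
  induction m with
  | zero => simp [prefixProj_zero]
  | succ m ih =>
    rw [List.prod_take_succ _ _ (by simpa using hm), ← mul_assoc, ih (by omega)]
    simpa using unitUpper_sub_prefixProj_mul_simpleReflection A ⟨m, hm⟩

theorem unitUpper_mul_prod_simpleReflection (A : Matrix (Fin n) (Fin n) R) :
    unitUpper A * ((List.finRange n).map (simpleReflection A)).prod = unitUpper A - A := by
  simpa [prefixProj_eq_one, List.take_of_length_le] using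
    unitUpper_mul_prod_take_simpleReflection A le_rfl

end Coxeter

/-- Howlett's matrix form of the Coxeter element: for a square matrix `A` over a
commutative ring with all diagonal entries `2`, writing `A = L + U` with `L`
lower unitriangular and `U` upper unitriangular (agreeing with `A` strictly
below/above the diagonal), and `S k = I - E_{kk} A`, the product
`S 1 ⋯ S n` equals `-U⁻¹ L`. -/
theorem howlett_coxeter_matrix {R : Type*} [CommRing R] {n : ℕ}
    (A : Matrix (Fin n) (Fin n) R) (hdiag : ∀ i, A i i = 2) :
    (((List.finRange n).map
        (fun k => (1 : Matrix (Fin n) (Fin n) R) - Matrix.single k k 1 * A)).prod) =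
      -((Matrix.of fun i j => if i = j then (1 : R) else if i < j then A i j else 0)⁻¹ *
        (Matrix.of fun i j => if i = j then (1 : R) else if j < i then A i j else 0)) := by
  change ((List.finRange n).map (simpleReflection A)).prod = -((unitUpper A)⁻¹ * unitLower A)
  have hdet : IsUnit (unitUpper A).det := by rw [det_unitUpper]; exact isUnit_one
  rw [← mul_neg, ← unitUpper_sub_self hdiag, ← unitUpper_mul_prod_simpleReflection,
    nonsing_inv_mul_cancel_left _ _ hdet]
end

section
/- Purity of the compatibility complex of arcs on a cycle (simplicial cyclohedron): fix an integer k ≥ 2. Call a subset S of ℤ/kℤ an arc if S is nonempty, proper, and is a cyclic interval {i, i+1, …, j} (indices mod k). Call two arcs S and T compatible if either they are nested (S ⊆ T or T ⊆ S) or they are spaced, meaning (S ∪ (S+1) ∪ (S−1)) ∩ T = ∅ (where S+1 and S−1 denote cyclic shifts). Then every family of pairwise compatible arcs that is maximal under inclusion has exactly k − 1 elements. -/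
/-- A subset of `ZMod k` is an arc if it is nonempty, proper, and a cyclic
interval `{i, i+1, …, j}`. -/
def IsArc (k : ℕ) (S : Set (ZMod k)) : Prop :=
  S.Nonempty ∧ S ≠ Set.univ ∧
    ∃ (i : ZMod k) (t : ℕ), S = {x | ∃ m : ℕ, m ≤ t ∧ x = i + (m : ZMod k)}

/-- Two arcs are compatible if they are nested or spaced. -/
def ArcCompatible (k : ℕ) (S T : Set (ZMod k)) : Prop :=
  S ⊆ T ∨ T ⊆ S ∨
    (S ∪ ((· + 1) '' S) ∪ ((· + (-1)) '' S)) ∩ T = ∅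

/-- A maximal (under inclusion) family of pairwise compatible arcs. -/
def MaxCompatFamily (k : ℕ) (J : Set (Set (ZMod k))) : Prop :=
  (∀ S ∈ J, IsArc k S) ∧ (∀ S ∈ J, ∀ T ∈ J, ArcCompatible k S T) ∧
    ∀ J' : Set (Set (ZMod k)), (∀ S ∈ J', IsArc k S) →
      (∀ S ∈ J', ∀ T ∈ J', ArcCompatible k S T) → J ⊆ J' → J' = J


/-!
Let `M` be a member of largest cardinality of a maximal family `J`, and `y ∈ M` with `y + 1 ∉ M`.
Every member of `J` is nested in `M` or spaced from it, so none contains `x = y + 1`. Cutting the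
cycle at `x` turns `J` into a maximal nested-or-spaced family of intervals of the path
`x + 1, …, x + (k - 1)`. On a path `[a, b)` such a family contains `[a, b)`, and its other members
avoid a neighbour `v` of a longest one among them, so they split into maximal families on `[a, v)`
and `[v + 1, b)`; by induction the family has `b - a` members.
-/

/-- The pair `(p, q)` stands for the half-open interval `[p, q)` of `ℕ`. -/
def IntervalCompat (I J : ℕ × ℕ) : Prop :=
  (J.1 ≤ I.1 ∧ I.2 ≤ J.2) ∨ (I.1 ≤ J.1 ∧ J.2 ≤ I.2) ∨ I.2 < J.1 ∨ J.2 < I.1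

def intervalsIn (a b : ℕ) : Set (ℕ × ℕ) := {I | a ≤ I.1 ∧ I.1 < I.2 ∧ I.2 ≤ b}

structure IsMaxIntervalFamily (a b : ℕ) (W : Set (ℕ × ℕ)) : Prop where
  subset : W ⊆ intervalsIn a b
  compat : ∀ I ∈ W, ∀ J ∈ W, IntervalCompat I J
  mem_of_compat : ∀ I ∈ intervalsIn a b, (∀ J ∈ W, IntervalCompat I J) → I ∈ W

theorem IntervalCompat.symm {I J : ℕ × ℕ} (h : IntervalCompat I J) : IntervalCompat J I := by
  unfold IntervalCompat at *
  omega

theorem forall_mem_Ico_apart_iff {p q p' q' : ℕ} (h : p < q) (h' : p' < q') :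
    (∀ n ∈ Set.Ico p q, ∀ m ∈ Set.Ico p' q', n ≠ m ∧ n + 1 ≠ m ∧ m + 1 ≠ n) ↔
      q < p' ∨ q' < p := by
  constructor
  · intro hapart
    by_contra! hmeet
    rcases le_total p p' with hpp' | hp'p
    · exact absurd (hapart (max p (p' - 1)) ⟨by omega, by omega⟩ p' ⟨le_rfl, h'⟩) (by omega)
    · exact absurd (hapart p ⟨le_rfl, h⟩ (max p' (p - 1)) ⟨by omega, by omega⟩) (by omega)
  · rintro hsep n ⟨hn1, hn2⟩ m ⟨hm1, hm2⟩
    omega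

namespace IsMaxIntervalFamily

variable {a b : ℕ} {W : Set (ℕ × ℕ)}

theorem finite (hW : IsMaxIntervalFamily a b W) : W.Finite :=
  ((Set.finite_Iic b).prod (Set.finite_Iic b)).subset fun I hI => by
    obtain ⟨-, h12, h2⟩ := hW.subset hI
    exact ⟨Set.mem_Iic.mpr (by omega), Set.mem_Iic.mpr h2⟩

theorem full_mem (hW : IsMaxIntervalFamily a b W) (hab : a < b) : (a, b) ∈ W :=
  hW.mem_of_compat _ ⟨le_rfl, hab, le_rfl⟩ fun J hJ => by
    obtain ⟨h1, -, h2⟩ := hW.subset hJ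
    exact Or.inr (Or.inl ⟨h1, h2⟩)

theorem exists_forall_avoid (hW : IsMaxIntervalFamily a b W) (hab : a < b) :
    ∃ v, a ≤ v ∧ v < b ∧ ∀ I ∈ W, I = (a, b) ∨ I.2 ≤ v ∨ v < I.1 := by
  rcases (W \ {(a, b)}).eq_empty_or_nonempty with hP | hP
  · refine ⟨a, le_rfl, hab, fun I hI => Or.inl ?_⟩
    by_contra hne
    exact (Set.eq_empty_iff_forall_notMem.mp hP) I ⟨hI, hne⟩
  obtain ⟨M, ⟨hMW, hMab⟩, hMmax⟩ := (W \ {(a, b)}).exists_max_image (fun I => I.2 - I.1)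
    hW.finite.sdiff hP
  have hMab' : M.1 ≠ a ∨ M.2 ≠ b := by
    by_contra! h
    exact hMab (Prod.ext h.1 h.2)
  obtain ⟨hM1, hM12, hM2⟩ := hW.subset hMW
  refine ⟨if M.2 < b then M.2 else M.1 - 1, by split_ifs <;> omega, by split_ifs <;> omega,
    fun I hI => or_iff_not_imp_left.mpr fun hIab => ?_⟩
  have hlen := hMmax I ⟨hI, hIab⟩
  obtain ⟨hI1, hI12, hI2⟩ := hW.subset hI
  rcases hW.compat I hI M hMW with h | h | h | h <;> split_ifs <;> omega

theorem inter_intervalsIn (hW : IsMaxIntervalFamily a b W) {a' b' : ℕ} (ha : a ≤ a')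
    (hb : b' ≤ b)
    (hout : ∀ I ∈ W, I ∉ intervalsIn a' b' → ∀ J ∈ intervalsIn a' b', IntervalCompat J I) :
    IsMaxIntervalFamily a' b' (W ∩ intervalsIn a' b') where
  subset := Set.inter_subset_right
  compat I hI J hJ := hW.compat I hI.1 J hJ.1
  mem_of_compat I hI hcompat := by
    refine ⟨hW.mem_of_compat I ?_ fun J hJ => ?_, hI⟩
    · obtain ⟨h1, h12, h2⟩ := hI
      exact ⟨by omega, h12, by omega⟩
    · by_cases hJ' : J ∈ intervalsIn a' b'
      · exact hcompat J ⟨hJ, hJ'⟩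
      · exact hout J hJ hJ' I hI

theorem ncard_eq (hW : IsMaxIntervalFamily a b W) : W.ncard = b - a := by
  induction hn : b - a using Nat.strong_induction_on generalizing a b W with
  | _ n ih =>
  rcases le_or_gt b a with hba | hab
  · have hempty : W = ∅ := Set.eq_empty_of_forall_notMem fun I hI => by
      obtain ⟨h1, h12, h2⟩ := hW.subset hI
      omega
    rw [hempty, Set.ncard_empty]
    omega
  obtain ⟨v, hav, hvb, hv⟩ := hW.exists_forall_avoid hab
  have hside : ∀ I ∈ W, I = (a, b) ∨ I ∈ intervalsIn a v ∨ I ∈ intervalsIn (v + 1) b := by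
    intro I hI
    obtain ⟨h1, h12, h2⟩ := hW.subset hI
    rcases hv I hI with h | h | h
    · exact Or.inl h
    · exact Or.inr (Or.inl ⟨h1, h12, h⟩)
    · exact Or.inr (Or.inr ⟨h, h12, h2⟩)
  have hleft := hW.inter_intervalsIn (a' := a) (b' := v) le_rfl hvb.le fun I hI hI' J ⟨hJ1, hJ12, hJ2⟩ => by
    rcases hside I hI with rfl | h | ⟨h1, h12, h2⟩
    · exact Or.inl ⟨hJ1, by omega⟩
    · exact absurd h hI'
    · exact Or.inr (Or.inr (Or.inl (by omega)))
  have hright := hW.inter_intervalsIn (a' := v + 1) (b' := b) (by omega) le_rfl fun I hI hI' J ⟨hJ1, hJ12, hJ2⟩ => by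
    rcases hside I hI with rfl | ⟨h1, h12, h2⟩ | h
    · exact Or.inl ⟨by omega, hJ2⟩
    · exact Or.inr (Or.inr (Or.inr (by omega)))
    · exact absurd h hI'
  have hsplit : W = insert (a, b) (W ∩ intervalsIn a v ∪ W ∩ intervalsIn (v + 1) b) := by
    ext I
    constructor
    · intro hI
      rcases hside I hI with h | h | h
      · exact Or.inl h
      · exact Or.inr (Or.inl ⟨hI, h⟩)
      · exact Or.inr (Or.inr ⟨hI, h⟩)
    · rintro (rfl | ⟨hI, -⟩ | ⟨hI, -⟩)
      exacts [hW.full_mem hab, hI, hI]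
  have hdisj : Disjoint (W ∩ intervalsIn a v) (W ∩ intervalsIn (v + 1) b) :=
    Set.disjoint_left.mpr fun I ⟨_, _, _, h⟩ ⟨_, h', _, _⟩ => by omega
  have hfull : (a, b) ∉ W ∩ intervalsIn a v ∪ W ∩ intervalsIn (v + 1) b := by
    rintro (⟨-, -, -, h⟩ | ⟨-, h, -, -⟩) <;> simp only at h <;> omega
  rw [hsplit, Set.ncard_insert_of_notMem hfull (hW.finite.subset (by simp)),
    Set.ncard_union_eq hdisj (hW.finite.inter_of_left _) (hW.finite.inter_of_left _),
    ih _ (by omega) hleft rfl, ih _ (by omega) hright rfl]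
  omega

end IsMaxIntervalFamily

variable {k : ℕ}

theorem arcCompatible_iff {S T : Set (ZMod k)} :
    ArcCompatible k S T ↔
      S ⊆ T ∨ T ⊆ S ∨ ∀ s ∈ S, ∀ t ∈ T, s ≠ t ∧ s + 1 ≠ t ∧ t + 1 ≠ s := by
  refine or_congr_right (or_congr_right ⟨fun h s hs t ht => ?_, fun h => ?_⟩)
  · have hnot := Set.eq_empty_iff_forall_notMem.mp h
    refine ⟨fun hst => hnot t ⟨Or.inl (Or.inl (hst ▸ hs)), ht⟩,
      fun hst => hnot t ⟨Or.inl (Or.inr ⟨s, hs, hst⟩), ht⟩,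
      fun hts => hnot t ⟨Or.inr ⟨s, hs, by rw [← hts]; ring⟩, ht⟩⟩
  · refine Set.eq_empty_of_forall_notMem ?_
    rintro x ⟨(hx | ⟨s, hs, rfl⟩) | ⟨s, hs, rfl⟩, hxT⟩
    · exact (h x hx x hxT).1 rfl
    · exact (h s hs _ hxT).2.1 rfl
    · exact (h s hs _ hxT).2.2 (by ring)

theorem exists_mem_add_one_notMem [NeZero k] {S : Set (ZMod k)} (hne : S.Nonempty)
    (huniv : S ≠ Set.univ) : ∃ y ∈ S, y + 1 ∉ S := by
  by_contra! hclosed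
  obtain ⟨s, hs⟩ := hne
  have hadd : ∀ n : ℕ, s + n ∈ S := by
    intro n
    induction n with
    | zero => simpa using hs
    | succ n ih => simpa [← add_assoc] using hclosed _ ih
  exact huniv (Set.eq_univ_of_forall fun z => by simpa using hadd (z - s).val)

theorem exists_forall_notMem_of_pairwise_arcCompatible [NeZero k] {J : Set (Set (ZMod k))}
    (hArc : ∀ S ∈ J, IsArc k S) (hJ : ∀ S ∈ J, ∀ T ∈ J, ArcCompatible k S T) :
    ∃ x, ∀ S ∈ J, x ∉ S := by
  rcases J.eq_empty_or_nonempty with rfl | hne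
  · exact ⟨0, by simp⟩
  obtain ⟨M, hM, hMmax⟩ := J.exists_max_image Set.ncard J.toFinite hne
  obtain ⟨y, hy, hy1⟩ := exists_mem_add_one_notMem (hArc M hM).1 (hArc M hM).2.1
  refine ⟨y + 1, fun V hV hyV => ?_⟩
  rcases arcCompatible_iff.mp (hJ M hM V hV) with h | h | h
  · exact hy1 (Set.eq_of_subset_of_ncard_le h (hMmax V hV) ▸ hyV)
  · exact hy1 (h hyV)
  · exact (h y hy _ hyV).2.1 rfl

def arcOfInterval (c : ZMod k) (I : ℕ × ℕ) : Set (ZMod k) :=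
  (fun n : ℕ => c + n) '' Set.Ico I.1 I.2

section arcOfInterval

variable (c : ZMod k)

theorem injOn_add_natCast : Set.InjOn (fun n : ℕ => c + (n : ZMod k)) (Set.Iio k) := by
  intro n hn m hm h
  have := congrArg ZMod.val (add_left_cancel h)
  rwa [ZMod.val_cast_of_lt hn, ZMod.val_cast_of_lt hm] at this

theorem arcOfInterval_subset_arcOfInterval_iff {I J : ℕ × ℕ} (hI : I.1 < I.2) (hIk : I.2 ≤ k)
    (hJk : J.2 ≤ k) :
    arcOfInterval c I ⊆ arcOfInterval c J ↔ J.1 ≤ I.1 ∧ I.2 ≤ J.2 := by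
  rw [arcOfInterval, arcOfInterval, (injOn_add_natCast c).image_subset_image_iff
    (Set.Ico_subset_Iio_self.trans (Set.Iio_subset_Iio hIk))
    (Set.Ico_subset_Iio_self.trans (Set.Iio_subset_Iio hJk)), Set.Ico_subset_Ico_iff hI]

theorem arcOfInterval_injOn : Set.InjOn (arcOfInterval c) (intervalsIn 0 k) :=
  fun I ⟨_, hI, hIk⟩ J ⟨_, hJ, hJk⟩ h => by
    have hIJ := (arcOfInterval_subset_arcOfInterval_iff c hI hIk hJk).mp h.subset
    have hJI := (arcOfInterval_subset_arcOfInterval_iff c hJ hJk hIk).mp h.symm.subset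
    exact Prod.ext (by omega) (by omega)

theorem forall_mem_arcOfInterval_apart_iff {I J : ℕ × ℕ} (hI : I ∈ intervalsIn 0 (k - 1))
    (hJ : J ∈ intervalsIn 0 (k - 1)) :
    (∀ s ∈ arcOfInterval c I, ∀ t ∈ arcOfInterval c J, s ≠ t ∧ s + 1 ≠ t ∧ t + 1 ≠ s) ↔
      I.2 < J.1 ∨ J.2 < I.1 := by
  obtain ⟨-, hI12, hI2⟩ := hI
  obtain ⟨-, hJ12, hJ2⟩ := hJ
  rw [← forall_mem_Ico_apart_iff hI12 hJ12]
  simp only [arcOfInterval, Set.forall_mem_image]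
  refine forall₂_congr fun n hn => forall₂_congr fun m hm => ?_
  have hnk : n + 1 < k := by grind
  have hmk : m + 1 < k := by grind
  have hinj := injOn_add_natCast c
  simp only [add_assoc, ← Nat.cast_add_one]
  rw [hinj.ne_iff (by grind) (by grind), hinj.ne_iff (by grind) (by grind),
    hinj.ne_iff (by grind) (by grind)]

theorem arcCompatible_arcOfInterval_iff {I J : ℕ × ℕ} (hI : I ∈ intervalsIn 0 (k - 1))
    (hJ : J ∈ intervalsIn 0 (k - 1)) :
    ArcCompatible k (arcOfInterval c I) (arcOfInterval c J) ↔ IntervalCompat I J := by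
  have ⟨_, hI12, hI2⟩ := hI
  have ⟨_, hJ12, hJ2⟩ := hJ
  rw [arcCompatible_iff, arcOfInterval_subset_arcOfInterval_iff c hI12 (by omega) (by omega),
    arcOfInterval_subset_arcOfInterval_iff c hJ12 (by omega) (by omega),
    forall_mem_arcOfInterval_apart_iff c hI hJ]
  rfl

variable [NeZero k]

theorem sub_one_eq_add_natCast : c - 1 = c + ((k - 1 : ℕ) : ZMod k) := by
  rw [Nat.cast_pred (NeZero.pos k), ZMod.natCast_self, zero_sub, sub_eq_add_neg]

theorem sub_one_notMem_arcOfInterval {I : ℕ × ℕ} (hI : I.2 ≤ k - 1) :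
    c - 1 ∉ arcOfInterval c I := by
  rintro ⟨n, ⟨-, hn⟩, h⟩
  rw [sub_one_eq_add_natCast] at h
  have := injOn_add_natCast c (show n < k by omega) (show k - 1 < k by omega) h
  omega

theorem isArc_arcOfInterval {I : ℕ × ℕ} (hI : I ∈ intervalsIn 0 (k - 1)) :
    IsArc k (arcOfInterval c I) := by
  obtain ⟨-, h12, h2⟩ := hI
  refine ⟨⟨c + I.1, I.1, ⟨le_rfl, h12⟩, rfl⟩,
    fun h => sub_one_notMem_arcOfInterval c h2 (by rw [h]; trivial), c + I.1, I.2 - I.1 - 1, ?_⟩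
  ext x
  constructor
  · rintro ⟨n, ⟨hn1, hn2⟩, rfl⟩
    exact ⟨n - I.1, by omega, by push_cast [Nat.cast_sub hn1]; ring⟩
  · rintro ⟨m, hm, rfl⟩
    exact ⟨I.1 + m, ⟨by omega, by omega⟩, by push_cast; ring⟩

theorem exists_eq_arcOfInterval {S : Set (ZMod k)} (hS : IsArc k S) (hc : c - 1 ∉ S) :
    ∃ I ∈ intervalsIn 0 (k - 1), S = arcOfInterval c I := by
  obtain ⟨-, -, i, t, rfl⟩ := hS
  set p := (i - c).val
  have hi : i = c + p := by simp [p]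
  have hpk : p < k := ZMod.val_lt _
  -- otherwise the arc passes through `c - 1 = c + (k - 1)`
  have hpt : p + t < k - 1 := by
    by_contra! h
    refine hc ⟨k - 1 - p, by omega, ?_⟩
    rw [sub_one_eq_add_natCast, hi, add_assoc, ← Nat.cast_add, Nat.add_sub_cancel' (by omega)]
  refine ⟨(p, p + t + 1), ⟨by omega, by omega, by omega⟩, ?_⟩
  ext x
  constructor
  · rintro ⟨m, hm, rfl⟩
    exact ⟨p + m, ⟨by omega, by omega⟩, by rw [hi]; push_cast; ring⟩
  · rintro ⟨n, ⟨hn1, hn2⟩, rfl⟩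
    exact ⟨n - p, by omega, by rw [hi]; push_cast [Nat.cast_sub hn1]; ring⟩

end arcOfInterval

namespace MaxCompatFamily

variable {J : Set (Set (ZMod k))}

theorem mem_of_forall_arcCompatible (hJ : MaxCompatFamily k J) {A : Set (ZMod k)}
    (hA : IsArc k A) (hAJ : ∀ V ∈ J, ArcCompatible k A V ∧ ArcCompatible k V A) : A ∈ J := by
  have hins := hJ.2.2 (insert A J) (Set.forall_mem_insert.mpr ⟨hA, hJ.1⟩)
    (Set.forall_mem_insert.mpr ⟨Set.forall_mem_insert.mpr ⟨Or.inl le_rfl, fun V hV => (hAJ V hV).1⟩,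
      fun V hV => Set.forall_mem_insert.mpr ⟨(hAJ V hV).2, hJ.2.1 V hV⟩⟩)
    (Set.subset_insert A J)
  exact hins ▸ Set.mem_insert A J

theorem ncard_eq_of_forall_notMem [NeZero k] (hJ : MaxCompatFamily k J) (c : ZMod k)
    (hc : ∀ S ∈ J, c - 1 ∉ S) : J.ncard = k - 1 := by
  set W := {I ∈ intervalsIn 0 (k - 1) | arcOfInterval c I ∈ J}
  have hJW : J = arcOfInterval c '' W := by
    ext S
    constructor
    · intro hS
      obtain ⟨I, hI, rfl⟩ := exists_eq_arcOfInterval c (hJ.1 S hS) (hc S hS)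
      exact ⟨I, ⟨hI, hS⟩, rfl⟩
    · rintro ⟨I, hI, rfl⟩
      exact hI.2
  have hW : IsMaxIntervalFamily 0 (k - 1) W :=
    { subset := fun I hI => hI.1
      compat := fun I hI I' hI' =>
        (arcCompatible_arcOfInterval_iff c hI.1 hI'.1).mp (hJ.2.1 _ hI.2 _ hI'.2)
      mem_of_compat := fun I hI hcompat => by
        refine ⟨hI, hJ.mem_of_forall_arcCompatible (isArc_arcOfInterval c hI) ?_⟩
        rw [hJW]
        rintro _ ⟨I', hI', rfl⟩
        exact ⟨(arcCompatible_arcOfInterval_iff c hI hI'.1).mpr (hcompat I' hI'),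
          (arcCompatible_arcOfInterval_iff c hI'.1 hI).mpr (hcompat I' hI').symm⟩ }
  have hWk : W ⊆ intervalsIn 0 k := fun I ⟨⟨h1, h12, h2⟩, _⟩ => ⟨h1, h12, by omega⟩
  rw [hJW, ((arcOfInterval_injOn c).mono hWk).ncard_image, hW.ncard_eq, Nat.sub_zero]

end MaxCompatFamily

/-- Purity of the compatibility complex of arcs on a `k`-cycle: every maximal
family of pairwise compatible arcs has exactly `k - 1` elements. -/
theorem maxCompatFamily_card (k : ℕ) (hk : 2 ≤ k)
    (J : Set (Set (ZMod k))) (hJ : MaxCompatFamily k J) :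
    J.ncard = k - 1 := by
  have : NeZero k := ⟨by omega⟩
  obtain ⟨x, hx⟩ := exists_forall_notMem_of_pairwise_arcCompatible hJ.1 hJ.2.1
  exact hJ.ncard_eq_of_forall_notMem (x + 1) (by simpa using hx)
end
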